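/- arXiv:0810.2486 — 5 statements merged into one kernel-verified Lean document; each statement's English description precedes it below -/
import Mathlib

section
/- Suppose t_a : M(ℝ) → C(ℝ) satisfies strict fifoness: whenever h₁ < h₂ and Y([h₁,h₂]) ≠ 0, then h₁ + t_a(Y)(h₁) < h₂ + t_a(Y)(h₂). Define H_a(Y)(h) := h + t_a(Y)(h). Let Y' be a measure with Y' ≤ Y, let h ∈ ℝ, and let E ⊆ (-∞, H_a(Y)(h)] be measurable. Then Y'(H_a(Y)⁻¹(E) ∩ (h, ∞)) = 0. -/
open MeasureTheory Set

/-- The set is down-closed in `(a, ∞)`, so it is covered by the null intervals `[a, q]` with `q`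
rational, except possibly for its maximum `m`, which lies in the null interval `[a, m]`. -/
theorem measure_setOf_measure_Icc_eq_zero (μ : Measure ℝ) (a : ℝ) :
    μ {x | a < x ∧ μ (Icc a x) = 0} = 0 := by
  set T := {x | a < x ∧ μ (Icc a x) = 0}
  by_cases hmax : ∃ m ∈ T, ∀ x ∈ T, x ≤ m
  · obtain ⟨m, hm, hmax⟩ := hmax
    exact measure_mono_null (t := Icc a m) (fun x hx => ⟨hx.1.le, hmax x hx⟩) hm.2
  push Not at hmax
  have hcover : T ⊆ ⋃ (q : ℚ) (_ : μ (Icc a q) = 0), Icc a (q : ℝ) := by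
    intro x hx
    obtain ⟨y, hy, hxy⟩ := hmax x hx
    obtain ⟨q, hxq, hqy⟩ := exists_rat_btwn hxy
    exact mem_biUnion (x := q) (measure_mono_null (Icc_subset_Icc_right hqy.le) hy.2)
      ⟨hx.1.le, hxq.le⟩
  exact measure_mono_null hcover (measure_iUnion_null fun q => measure_iUnion_null id)

theorem fifo_no_late_exit_general (ta : Measure ℝ → C(ℝ, ℝ))
    (hfifo : ∀ (Y : Measure ℝ) (h₁ h₂ : ℝ), h₁ < h₂ → Y (Icc h₁ h₂) ≠ 0 →
      h₁ + ta Y h₁ < h₂ + ta Y h₂)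
    (Y Y' : Measure ℝ) (hle : Y' ≤ Y) (h : ℝ) (E : Set ℝ)
    (hEsub : E ⊆ Iic (h + ta Y h)) :
    Y' ((fun h' => h' + ta Y h') ⁻¹' E ∩ Ioi h) = 0 := by
  have hnull_since_h : (fun h' => h' + ta Y h') ⁻¹' E ∩ Ioi h ⊆
      {x | h < x ∧ Y (Icc h x) = 0} := fun x ⟨hxE, hx⟩ =>
    ⟨hx, by_contra fun hne => (hfifo Y h x hx hne).not_ge (hEsub hxE)⟩
  exact Measure.absolutelyContinuous_of_le hle
    (measure_mono_null hnull_since_h (measure_setOf_measure_Icc_eq_zero Y h))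

/-- Under strict fifoness, if `E ⊆ (-∞, H_a(Y)(h)]` then no user entering after `h`
can exit during `E`: for any `Y' ≤ Y` we have `Y'(H_a(Y)⁻¹(E) ∩ (h,∞)) = 0`. -/
theorem fifo_no_late_exit (ta : Measure ℝ → C(ℝ, ℝ))
    (hfifo : ∀ (Y : Measure ℝ) (h₁ h₂ : ℝ), h₁ < h₂ → Y (Icc h₁ h₂) ≠ 0 →
      h₁ + ta Y h₁ < h₂ + ta Y h₂)
    (Y Y' : Measure ℝ) (hle : Y' ≤ Y) (h : ℝ) (E : Set ℝ) (hE : MeasurableSet E)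
    (hEsub : E ⊆ Iic (h + ta Y h)) :
    Y' ((fun h' => h' + ta Y h') ⁻¹' E ∩ Ioi h) = 0 :=
  fifo_no_late_exit_general ta hfifo Y Y' hle h E hEsub
end

section
/- Suppose t_a satisfies causality and strict fifoness, and let H_a(Y)(h) := h + t_a(Y)(h). For a measure Y on ℝ, a measure Y^r ≤ Y, define the pushforward flow ψ(Y^r, Y)(J) := Y^r(H_a(Y)⁻¹(J)). Then for every h ∈ ℝ, the restriction of ψ(Y^r, Y) to (-∞, H_a(Y)(h)] equals the restriction of ψ(Y^r|_h, Y|_h) to (-∞, H_a(Y|_h)(h)]. -/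
/-!
Causality says that `t_a(Y)` and `t_a(Y|_h)` agree on `(-∞, h]`, so on that half-line both
flows are pushed forward by the same exit time function. It remains to see that no mass of `Yʳ`
entering after `h` leaves by `H_a(Y)(h)`. Strict fifoness gives this for every `x > h` with
`Y([h, x]) > 0`, and the remaining points `x > h` with `Y([h, x]) = 0` form a `Y`-null set: they
are covered by countably many `Y`-null intervals `[h, q]`, with `q` in a countable dense set,
together with the largest such point if there is one.
-/

open MeasureTheory Set

theorem ae_lt_imp_measure_Icc_ne_zero {α : Type*} [LinearOrder α] [TopologicalSpace α]
    [OrderClosedTopology α] [DenselyOrdered α] [TopologicalSpace.SeparableSpace α]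
    [MeasurableSpace α] (μ : Measure α) (a : α) :
    ∀ᵐ x ∂μ, a < x → μ (Icc a x) ≠ 0 := by
  set B := {x | a < x ∧ μ (Icc a x) = 0}
  obtain ⟨D, hD, hDdense⟩ := TopologicalSpace.exists_countable_dense α
  set T := D ∩ B ∪ {x | IsGreatest B x}
  have hT : T.Countable :=
    (hD.mono inter_subset_left).union
      (Set.Subsingleton.countable fun _ hx _ hy => IsGreatest.unique hx hy)
  have hcover : B ⊆ ⋃ x ∈ T, Icc a x := by
    intro x hx
    by_cases hmax : IsGreatest B x
    · exact mem_biUnion (Or.inr hmax) ⟨hx.1.le, le_rfl⟩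
    obtain ⟨y, hy, hxy⟩ : ∃ y ∈ B, x < y := by
      simpa [IsGreatest, hx, upperBounds] using hmax
    obtain ⟨q, hqD, hxq, hqy⟩ := hDdense.exists_between hxy
    have hqB : q ∈ B :=
      ⟨hx.1.trans hxq, measure_mono_null (Icc_subset_Icc_right hqy.le) hy.2⟩
    exact mem_biUnion (Or.inl ⟨hqD, hqB⟩) ⟨hx.1.le, hxq.le⟩
  have hTnull : ∀ x ∈ T, μ (Icc a x) = 0 := by
    rintro x (hx | hx)
    exacts [hx.2.2, hx.1.2]
  simpa [ae_iff, B] using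
    measure_mono_null hcover ((measure_biUnion_null_iff hT).2 hTnull)

theorem Measure.restrict_map_restrict_of_ae {α β : Type*} [MeasurableSpace α]
    [MeasurableSpace β] {ν : Measure α} {f : α → β} (hf : Measurable f) {s : Set α}
    {t : Set β} (ht : MeasurableSet t) (h : ∀ᵐ x ∂ν, f x ∈ t → x ∈ s) :
    ((ν.restrict s).map f).restrict t = (ν.map f).restrict t := by
  rw [Measure.restrict_map hf ht, Measure.restrict_map hf ht,
    Measure.restrict_restrict (hf ht), Measure.restrict_congr_set]
  filter_upwards [h] with x hx
  exact propext ⟨fun hx' => hx'.1, fun hx' => ⟨hx', hx hx'⟩⟩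

section Arc

variable (ta : Measure ℝ → C(ℝ, ℝ))

theorem ta_restrict_Iic_of_le
    (hcaus : ∀ (Y : Measure ℝ) (h : ℝ), ta (Y.restrict (Iic h)) h = ta Y h)
    (Y : Measure ℝ) {x h : ℝ} (hx : x ≤ h) : ta (Y.restrict (Iic h)) x = ta Y x := by
  rw [← hcaus (Y.restrict (Iic h)) x, Measure.restrict_restrict measurableSet_Iic,
    Iic_inter_Iic, min_eq_left hx, hcaus]

theorem ae_add_ta_lt_of_lt
    (hfifo : ∀ (Y : Measure ℝ) (h₁ h₂ : ℝ), h₁ < h₂ → Y (Icc h₁ h₂) ≠ 0 →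
      h₁ + ta Y h₁ < h₂ + ta Y h₂)
    (Y : Measure ℝ) (h : ℝ) : ∀ᵐ x ∂Y, h < x → h + ta Y h < x + ta Y x := by
  filter_upwards [ae_lt_imp_measure_Icc_ne_zero Y h] with x hx hhx
  exact hfifo Y h x hhx (hx hhx)

end Arc

theorem flowing_restrict_eq_general (ta : Measure ℝ → C(ℝ, ℝ))
    (hcaus : ∀ (Y : Measure ℝ) (h : ℝ), ta (Y.restrict (Iic h)) h = ta Y h)
    (hfifo : ∀ (Y : Measure ℝ) (h₁ h₂ : ℝ), h₁ < h₂ → Y (Icc h₁ h₂) ≠ 0 →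
      h₁ + ta Y h₁ < h₂ + ta Y h₂)
    (Y Yr : Measure ℝ) (hle : Yr ≤ Y) (h : ℝ) :
    (Yr.map (fun h' => h' + ta Y h')).restrict (Iic (h + ta Y h))
      = ((Yr.restrict (Iic h)).map
            (fun h' => h' + ta (Y.restrict (Iic h)) h')).restrict
          (Iic (h + ta (Y.restrict (Iic h)) h)) := by
  have hH : Measurable fun x => x + ta Y x :=
    (continuous_id.add (ta Y).continuous).measurable
  have hmap : (Yr.restrict (Iic h)).map (fun x => x + ta (Y.restrict (Iic h)) x)
      = (Yr.restrict (Iic h)).map (fun x => x + ta Y x) := by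
    refine Measure.map_congr ((ae_restrict_iff' measurableSet_Iic).2 (ae_of_all _ fun x hx => ?_))
    simp only [ta_restrict_Iic_of_le ta hcaus Y hx]
  rw [ta_restrict_Iic_of_le ta hcaus Y le_rfl, hmap]
  refine (Measure.restrict_map_restrict_of_ae hH measurableSet_Iic ?_).symm
  filter_upwards [(Measure.absolutelyContinuous_of_le hle).ae_le
    (ae_add_ta_lt_of_lt ta hfifo Y h)] with x hx hxH
  by_contra hxh
  exact (hx (not_le.1 hxh)).not_ge hxH

/-- Under causality and strict fifoness, the flow leaving an arc, restricted to exit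
times `≤ H_a(Y)(h)`, only depends on the flow entering the arc before `h`:
`ψ(Yʳ, Y)|_{H_a(Y)(h)} = ψ(Yʳ|_h, Y|_h)|_{H_a(Y|_h)(h)}`, where `ψ(Yʳ, Y)` is the
pushforward of `Yʳ` under the exit time function `H_a(Y)`. -/
theorem flowing_restrict_eq (ta : Measure ℝ → C(ℝ, ℝ))
    (hcaus : ∀ (Y : Measure ℝ) (h : ℝ), ta (Y.restrict (Iic h)) h = ta Y h)
    (hfifo : ∀ (Y : Measure ℝ) (h₁ h₂ : ℝ), h₁ < h₂ → Y (Icc h₁ h₂) ≠ 0 →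
      h₁ + ta Y h₁ < h₂ + ta Y h₂)
    (Y Yr : Measure ℝ) [IsFiniteMeasure Y] [IsFiniteMeasure Yr] (hle : Yr ≤ Y) (h : ℝ) :
    (Yr.map (fun h' => h' + ta Y h')).restrict (Iic (h + ta Y h))
      = ((Yr.restrict (Iic h)).map
            (fun h' => h' + ta (Y.restrict (Iic h)) h')).restrict
          (Iic (h + ta (Y.restrict (Iic h)) h)) :=
  flowing_restrict_eq_general ta hcaus hfifo Y Yr hle h
end

section
/- Suppose t_a satisfies causality, strict fifoness, and no infinite speed (there is t_min > 0 with t_a(Y)(h) > t_min for all Y, h). With ψ(Y^r, Y)(J) := Y^r(H_a(Y)⁻¹(J)) where H_a(Y)(h) := h + t_a(Y)(h), for every h ∈ ℝ and Y^r ≤ Y we have ψ(Y^r, Y)|_{h + t_min} = ψ(Y^r|_h, Y|_h)|_{h + t_min}. -/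
open MeasureTheory Set

/-- Under causality, strict fifoness and no infinite speed (travel time `> t_min > 0`),
the flow leaving an arc before time `h + t_min` only depends on the flow entering
before `h`: `ψ(Yʳ, Y)|_{h+t_min} = ψ(Yʳ|_h, Y|_h)|_{h+t_min}`. -/
theorem flowing_restrict_tmin (ta : Measure ℝ → C(ℝ, ℝ)) (tmin : ℝ) (htmin : 0 < tmin)
    (hcaus : ∀ (Y : Measure ℝ) (h : ℝ), ta (Y.restrict (Iic h)) h = ta Y h)
    (hfifo : ∀ (Y : Measure ℝ) (h₁ h₂ : ℝ), h₁ < h₂ → Y (Icc h₁ h₂) ≠ 0 →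
      h₁ + ta Y h₁ < h₂ + ta Y h₂)
    (hspeed : ∀ (Y : Measure ℝ) (h : ℝ), tmin < ta Y h)
    (Y Yr : Measure ℝ) [IsFiniteMeasure Y] [IsFiniteMeasure Yr] (hle : Yr ≤ Y) (h : ℝ) :
    (Yr.map (fun h' => h' + ta Y h')).restrict (Iic (h + tmin))
      = ((Yr.restrict (Iic h)).map
            (fun h' => h' + ta (Y.restrict (Iic h)) h')).restrict (Iic (h + tmin)) := by
  have hHc : Continuous fun h' => h' + ta Y h' :=
    continuous_id.add (ta Y).continuous
  have hmeas : Measurable fun h' => h' + ta Y h' := hHc.measurable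
  -- On `Iic h` the two travel time functions agree, by causality.
  have key : ∀ h' ≤ h, h' + ta Y h' = h' + ta (Y.restrict (Iic h)) h' := by
    intro h' hh'
    have h1 := hcaus Y h'
    have h2 := hcaus (Y.restrict (Iic h)) h'
    rw [Measure.restrict_restrict_of_subset (Iic_subset_Iic.mpr hh')] at h2
    rw [← h1, ← h2]
  have step1 : (Yr.restrict (Iic h)).map (fun h' => h' + ta Y h')
      = (Yr.restrict (Iic h)).map (fun h' => h' + ta (Y.restrict (Iic h)) h') := by
    apply Measure.map_congr
    exact (ae_restrict_iff' measurableSet_Iic).mpr (ae_of_all _ key)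
  rw [← step1]
  ext s hs
  rw [Measure.restrict_apply hs, Measure.restrict_apply hs,
    Measure.map_apply hmeas (hs.inter measurableSet_Iic),
    Measure.map_apply hmeas (hs.inter measurableSet_Iic),
    Measure.restrict_apply (hmeas (hs.inter measurableSet_Iic))]
  congr 1
  ext x
  simp only [mem_inter_iff, mem_preimage, mem_Iic]
  constructor
  · rintro ⟨hxs, hxle⟩
    refine ⟨⟨hxs, hxle⟩, ?_⟩
    have := hspeed Y x
    linarith
  · rintro ⟨hx, _⟩; exact hx
end

section
/- In the arc performance model with continuous strictly increasing positive delay function D_a (D_a(0) = d_min > 0), the exit time function H satisfies causality: for all h ∈ ℝ and all Y ∈ M(ℝ), H_{Y|_h}(h) = H_Y(h), where H_Y denotes the unique solution of the system V_Y(h') = Y((-∞,h']) − Y(H_Y⁻¹((-∞,h'])) and H_Y(h') = h' + D_a(V_Y(h')). More generally H_{Y|_h}(h') = H_Y(h') for all h' ≤ h. -/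
open MeasureTheory Set

/-- Causality for the arc performance model: if `(V, HY)` solves the arc performance
system for `Y` and `(V', HY')` solves it for the restriction `Y|_h`, then
`HY'(h') = HY(h')` for all `h' ≤ h`; in particular `H_{Y|_h}(h) = H_Y(h)`. -/
theorem arc_performance_causality (D : ℝ → ℝ) (hDc : Continuous D)
    (hDmono : StrictMonoOn D (Ici 0)) (hDpos : ∀ x ≥ (0:ℝ), 0 < D x)
    (dmin : ℝ) (hdmin : dmin = D 0) (hd : 0 < dmin)
    (Y : Measure ℝ) [IsFiniteMeasure Y] (hsupp : Y (Iio 0) = 0) (h : ℝ)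
    (V HY V' HY' : ℝ → ℝ)
    (hV0 : ∀ h', 0 ≤ V h') (hV'0 : ∀ h', 0 ≤ V' h')
    (hsys : ∀ h', V h' = (Y (Iic h')).toReal - (Y (HY ⁻¹' Iic h')).toReal ∧
      HY h' = h' + D (V h'))
    (hsys' : ∀ h', V' h' = ((Y.restrict (Iic h)) (Iic h')).toReal
        - ((Y.restrict (Iic h)) (HY' ⁻¹' Iic h')).toReal ∧
      HY' h' = h' + D (V' h')) :
    ∀ h' ≤ h, HY' h' = HY h' := by
  have hHY_ge : ∀ x, x + dmin ≤ HY x := by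
    intro x
    have h1 : D 0 ≤ D (V x) :=
      hDmono.monotoneOn (mem_Ici.2 le_rfl) (mem_Ici.2 (hV0 x)) (hV0 x)
    have h2 := (hsys x).2
    rw [hdmin]; linarith
  have hHY'_ge : ∀ x, x + dmin ≤ HY' x := by
    intro x
    have h1 : D 0 ≤ D (V' x) :=
      hDmono.monotoneOn (mem_Ici.2 le_rfl) (mem_Ici.2 (hV'0 x)) (hV'0 x)
    have h2 := (hsys' x).2
    rw [hdmin]; linarith
  have key : ∀ n : ℕ, ∀ h', h' ≤ h → h' < n * dmin → HY' h' = HY h' := by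
    intro n
    induction n with
    | zero =>
      intro h' hh' hlt
      simp only [Nat.cast_zero, zero_mul] at hlt
      have hs : HY ⁻¹' Iic h' ⊆ Iio 0 := by
        intro x hx
        simp only [mem_preimage, mem_Iic] at hx
        have := hHY_ge x
        simp only [mem_Iio]; linarith
      have hs' : HY' ⁻¹' Iic h' ⊆ Iio 0 := by
        intro x hx
        simp only [mem_preimage, mem_Iic] at hx
        have := hHY'_ge x
        simp only [mem_Iio]; linarith
      have e1 : Y (HY ⁻¹' Iic h') = 0 := measure_mono_null hs hsupp
      have e2 : Y.restrict (Iic h) (HY' ⁻¹' Iic h') = 0 := by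
        rw [Measure.restrict_apply' measurableSet_Iic]
        exact measure_mono_null (inter_subset_left.trans hs') hsupp
      have e3 : Y.restrict (Iic h) (Iic h') = Y (Iic h') := by
        rw [Measure.restrict_apply' measurableSet_Iic,
          inter_eq_left.2 (Iic_subset_Iic.2 hh')]
      have eV : V' h' = V h' := by
        rw [(hsys h').1, (hsys' h').1, e1, e2, e3]
      rw [(hsys h').2, (hsys' h').2, eV]
    | succ n ih =>
      intro h' hh' hlt
      have hlt' : (h' : ℝ) < n * dmin + dmin := by
        push_cast at hlt; linarith
      have hset : HY' ⁻¹' Iic h' = HY ⁻¹' Iic h' := by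
        ext x
        simp only [mem_preimage, mem_Iic]
        constructor
        · intro hx
          have hx1 : x + dmin ≤ h' := le_trans (hHY'_ge x) hx
          have hrw : HY' x = HY x := ih x (by linarith) (by linarith)
          rw [← hrw]; exact hx
        · intro hx
          have hx1 : x + dmin ≤ h' := le_trans (hHY_ge x) hx
          have hrw : HY' x = HY x := ih x (by linarith) (by linarith)
          rw [hrw]; exact hx
      have hsub : HY' ⁻¹' Iic h' ⊆ Iic h := by
        intro x hx
        simp only [mem_preimage, mem_Iic] at hx
        have := hHY'_ge x
        simp only [mem_Iic]; linarith
      have e2 : Y.restrict (Iic h) (HY' ⁻¹' Iic h') = Y (HY ⁻¹' Iic h') := by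
        rw [Measure.restrict_apply' measurableSet_Iic, inter_eq_left.2 hsub, hset]
      have e3 : Y.restrict (Iic h) (Iic h') = Y (Iic h') := by
        rw [Measure.restrict_apply' measurableSet_Iic,
          inter_eq_left.2 (Iic_subset_Iic.2 hh')]
      have eV : V' h' = V h' := by
        rw [(hsys h').1, (hsys' h').1, e2, e3]
      rw [(hsys h').2, (hsys' h').2, eV]
  intro h' hh'
  obtain ⟨n, hn⟩ := exists_nat_gt (h' / dmin)
  exact key n h' hh' (by rwa [div_lt_iff₀ hd] at hn)
end

section
/- Suppose for each arc a along a route r = a₁…a_n the travel time t_a satisfies continuity, no infinite speed, finiteness, strict fifoness and causality, and the arc flows Y_{a_i} depend continuously on the route flow vector X (weak topology on measures). Then the route travel time function t_r : M(I) → C(I,ℝ) defined by t_r(X)(h) = (H_{a_n}(Y_{a_n}) ∘ ⋯ ∘ H_{a_1}(Y_{a_1}))(h) − h is continuous, where C(I,ℝ) carries the sup norm. -/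
open MeasureTheory Set

/- Each step `H_a(Y) = id + t_a(Y)` of the route depends continuously on the arc flow, and
composition `C(ℝ, ℝ) × C(ℝ, ℝ) → C(ℝ, ℝ)` is jointly continuous for the compact-open topology
(`ℝ` is locally compact), so the composed exit map depends continuously on `X` by induction on
the route length. Restricting to the compact interval `I`, where the compact-open topology is
the sup-norm topology, and subtracting the identity are continuous as well. -/

/-- The composed route exit time map `H_{a_n}(Y_{a_n}) ∘ ⋯ ∘ H_{a_1}(Y_{a_1})`. -/
noncomputable def routeExitMap (ta : ℕ → Measure ℝ → C(ℝ, ℝ)) (Y : ℕ → Measure ℝ) :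
    ℕ → C(ℝ, ℝ)
  | 0 => ContinuousMap.id ℝ
  | (i + 1) =>
      (⟨fun x => x + ta i (Y i) x, continuous_id.add (ta i (Y i)).continuous⟩ :
        C(ℝ, ℝ)).comp (routeExitMap ta Y i)

theorem routeExitMap_succ (ta : ℕ → Measure ℝ → C(ℝ, ℝ)) (Y : ℕ → Measure ℝ) (i : ℕ) :
    routeExitMap ta Y (i + 1) = (ContinuousMap.id ℝ + ta i (Y i)).comp (routeExitMap ta Y i) :=
  rfl

theorem continuous_routeExitMap {α : Type*} [TopologicalSpace α] (ta : ℕ → Measure ℝ → C(ℝ, ℝ))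
    (Y : α → ℕ → Measure ℝ) (hY : ∀ i, Continuous fun x => ta i (Y x i)) (n : ℕ) :
    Continuous fun x => routeExitMap ta (Y x) n := by
  induction n with
  | zero => exact continuous_const
  | succ i ih =>
    simp only [routeExitMap_succ]
    exact ContinuousMap.continuous_comp'.comp (ih.prodMk (continuous_const.add (hY i)))

theorem ContinuousMap.continuous_restrict_sub_val (s : Set ℝ) :
    Continuous fun f : C(ℝ, ℝ) => f.restrict s - ⟨Subtype.val, continuous_subtype_val⟩ :=
  (ContinuousMap.continuous_restrict s).sub continuous_const

theorem route_travel_time_continuous_general (Hh : ℝ)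
    (ta : ℕ → Measure ℝ → C(ℝ, ℝ))
    (hcont : ∀ i, Continuous fun Y : FiniteMeasure ℝ => ta i (Y : Measure ℝ))
    (n : ℕ) (φ : ℕ → FiniteMeasure (Icc (0:ℝ) Hh) → FiniteMeasure ℝ)
    (hφ : ∀ i, Continuous (φ i)) :
    Continuous (fun X : FiniteMeasure (Icc (0:ℝ) Hh) =>
      (⟨fun h : Icc (0:ℝ) Hh =>
          routeExitMap ta (fun i => (φ i X : Measure ℝ)) n (h : ℝ) - (h : ℝ),
        ((routeExitMap ta (fun i => (φ i X : Measure ℝ)) n).continuous.comp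
            continuous_subtype_val).sub continuous_subtype_val⟩ :
        C(Icc (0:ℝ) Hh, ℝ))) :=
  (ContinuousMap.continuous_restrict_sub_val (Icc 0 Hh)).comp
    (continuous_routeExitMap ta (fun X i => φ i X) (fun i => (hcont i).comp (hφ i)) n)

/-- Lemma 5 (lem:cont): if each arc travel time function satisfies continuity, no
infinite speed, finiteness, strict fifoness and causality, and the arc flows
`Y_{a_i} = φ_i(X)` depend continuously (weak topology) on the route flow `X ∈ M(I)`,
then the route travel time function
`t_r(X)(h) = (H_{a_n}(Y_{a_n}) ∘ ⋯ ∘ H_{a_1}(Y_{a_1}))(h) − h` is continuous from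
`M(I)` to `C(I, ℝ)` with the sup norm. -/
theorem route_travel_time_continuous (Hh : ℝ) (hHh : 0 ≤ Hh)
    (ta : ℕ → Measure ℝ → C(ℝ, ℝ))
    (hcont : ∀ i, Continuous fun Y : FiniteMeasure ℝ => ta i (Y : Measure ℝ))
    (tmin : ℝ) (htmin : 0 < tmin)
    (hspeed : ∀ (i : ℕ) (Y : Measure ℝ) (h : ℝ), tmin < ta i Y h)
    (tmax : ℝ → ℝ) (htmax : Continuous tmax)
    (hfin : ∀ (i : ℕ) (Y : Measure ℝ) (h : ℝ), ta i Y h ≤ tmax (Y univ).toReal)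
    (hfifo : ∀ (i : ℕ) (Y : Measure ℝ) (h₁ h₂ : ℝ), h₁ < h₂ → Y (Icc h₁ h₂) ≠ 0 →
      h₁ + ta i Y h₁ < h₂ + ta i Y h₂)
    (hcaus : ∀ (i : ℕ) (Y : Measure ℝ) (h : ℝ), ta i (Y.restrict (Iic h)) h = ta i Y h)
    (n : ℕ) (φ : ℕ → FiniteMeasure (Icc (0:ℝ) Hh) → FiniteMeasure ℝ)
    (hφ : ∀ i, Continuous (φ i)) :
    Continuous (fun X : FiniteMeasure (Icc (0:ℝ) Hh) =>
      (⟨fun h : Icc (0:ℝ) Hh =>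
          routeExitMap ta (fun i => (φ i X : Measure ℝ)) n (h : ℝ) - (h : ℝ),
        ((routeExitMap ta (fun i => (φ i X : Measure ℝ)) n).continuous.comp
            continuous_subtype_val).sub continuous_subtype_val⟩ :
        C(Icc (0:ℝ) Hh, ℝ))) :=
  route_travel_time_continuous_general Hh ta hcont n φ hφ
end
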